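/- arXiv:math/0504306 — 2 statements merged into one kernel-verified Lean document; each statement's English description precedes it below -/
import Mathlib

section
/- Every automorphism of the symmetric group Sₙ for n ≠ 6 (n a natural number, n ≠ 6) is inner. -/
/-!
An automorphism of `Sₙ` preserves the order of an element and of its centralizer. The
centralizer of a product of `k` disjoint transpositions has order `(n - 2k)! 2ᵏ k!`, which equals
that of a transposition, `(n - 2)! 2`, only for `k = 1` or `(n, k) = (6, 3)`. So for `n ≠ 6`
transpositions go to transpositions. The images of the pairwise non-commuting transpositions
`(a₀ x)` then all pass through one point `p`, say `(a₀ x) ↦ (p f(x))`, and conjugation by the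
bijection `f` with `f a₀ = p` agrees with the automorphism on these generators.
-/

open Equiv Equiv.Perm

section Factorials

open Nat

lemma two_pow_mul_factorial_succ_lt_factorial_two_mul {m : ℕ} (hm : 3 ≤ m) :
    2 ^ m * (m + 1)! < (2 * m)! := by
  induction m, hm using Nat.le_induction with
  | base => decide
  | succ m hm ih =>
    calc 2 ^ (m + 1) * (m + 2)! = 2 * (m + 2) * (2 ^ m * (m + 1)!) := by
          rw [factorial_succ (m + 1)]; ring
      _ < 2 * (m + 2) * (2 * m)! := by gcongr
      _ ≤ (2 * m + 2) * (2 * m + 1) * (2 * m)! := Nat.mul_le_mul_right _ (by nlinarith)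
      _ = (2 * (m + 1))! := by
          rw [show 2 * (m + 1) = 2 * m + 1 + 1 by ring, factorial_succ, factorial_succ]; ring

lemma eq_six_of_factorial_mul_two_pow_mul_factorial_eq {N k : ℕ} (hk : 2 ≤ k) (hkN : 2 * k ≤ N)
    (h : (N - 2 * k)! * 2 ^ k * k ! = (N - 2)! * 2) : N = 6 := by
  obtain ⟨r, rfl⟩ := Nat.exists_eq_add_of_le' hkN
  obtain ⟨j, rfl⟩ := Nat.exists_eq_add_of_le' hk
  rw [show r + 2 * (j + 2) - 2 * (j + 2) = r by omega,
    show r + 2 * (j + 2) - 2 = r + 2 * (j + 1) by omega] at h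
  have hr := factorial_pos r
  rcases show j = 0 ∨ j = 1 ∨ 2 ≤ j by omega with rfl | rfl | hj
  · have : r ! * 4 = r ! * ((r + 1) * (r + 2)) := by
      simp only [factorial_succ, factorial_zero] at h; ring_nf at h ⊢; linarith
    have := Nat.eq_of_mul_eq_mul_left hr this
    rcases r with _ | r <;> nlinarith
  · have : r ! * 24 = r ! * ((r + 1) * (r + 2) * (r + 3) * (r + 4)) := by
      simp only [factorial_succ, factorial_zero] at h; ring_nf at h ⊢; linarith
    have := Nat.eq_of_mul_eq_mul_left hr this
    rcases r with _ | r
    · rfl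
    · ring_nf at this; nlinarith
  · have hsub := Nat.le_of_dvd (factorial_pos _)
      (Nat.factorial_mul_factorial_dvd_factorial_add r (2 * (j + 1)))
    have hlt := two_pow_mul_factorial_succ_lt_factorial_two_mul (m := j + 1) (by omega)
    have : (r + 2 * (j + 1))! * 2 < (r + 2 * (j + 1))! * 2 :=
      calc (r + 2 * (j + 1))! * 2 = r ! * (2 ^ (j + 1) * (j + 2)!) * 2 := by rw [← h]; ring
        _ < r ! * (2 * (j + 1))! * 2 := by gcongr
        _ ≤ (r + 2 * (j + 1))! * 2 := by gcongr
    exact absurd this (lt_irrefl _)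

lemma Equiv.Perm.natCard_centralizer_of_cycleType_eq_replicate_two {α : Type*} [Fintype α]
    [DecidableEq α] {σ : Perm α} {k : ℕ} (hσ : σ.cycleType = Multiset.replicate k 2) :
    Nat.card (Subgroup.centralizer {σ}) = (Fintype.card α - 2 * k)! * 2 ^ k * k ! := by
  rw [nat_card_centralizer, hσ]
  rcases eq_or_ne k 0 with rfl | hk
  · simp
  · simp [hk, mul_comm k]

end Factorials

section Groups

variable {G H : Type*} [Group G] [Group H]

lemma MulEquiv.natCard_centralizer_apply (φ : G ≃* H) (g : G) :
    Nat.card (Subgroup.centralizer {φ g}) = Nat.card (Subgroup.centralizer {g}) := by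
  refine Nat.card_congr (φ.toEquiv.subtypeEquiv fun a => ?_).symm
  simp only [Subgroup.mem_centralizer_singleton_iff, MulEquiv.toEquiv_eq_coe, EquivLike.coe_coe,
    ← map_mul, φ.injective.eq_iff]

lemma MulEquiv.not_commute_apply (φ : G ≃* H) {a b : G} (h : ¬Commute a b) :
    ¬Commute (φ a) (φ b) :=
  fun hc => h (by simpa using hc.map φ.symm)

lemma MulEquiv.apply_eq_self_of_natCard_le_two [Finite G] (hG : Nat.card G ≤ 2) (φ : G ≃* G)
    (g : G) : φ g = g := by
  classical
  by_contra hne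
  have hg : g ≠ 1 := by rintro rfl; exact hne (map_one φ)
  have hφg : φ g ≠ 1 := (map_ne_one_iff φ).mpr hg
  have := Fintype.ofFinite G
  have h3 := Finset.card_le_univ ({1, g, φ g} : Finset G)
  rw [Finset.card_eq_three.mpr ⟨1, g, φ g, hg.symm, hφg.symm, Ne.symm hne, rfl⟩,
    ← Nat.card_eq_fintype_card] at h3
  omega

end Groups

section Swaps

variable {α : Type*} [DecidableEq α]

lemma Equiv.eq_or_eq_of_not_commute_swap_swap {a b c d : α}
    (h : ¬Commute (swap a b) (swap c d)) : a = c ∨ a = d ∨ b = c ∨ b = d := by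
  by_contra! hne
  obtain ⟨hac, had, hbc, hbd⟩ := hne
  have hconj := swap_apply_apply (swap c d) a b
  rw [swap_apply_of_ne_of_ne hac had, swap_apply_of_ne_of_ne hbc hbd, swap_inv] at hconj
  apply h
  rw [Commute, SemiconjBy]
  conv_lhs => rw [hconj]
  simp [mul_assoc]

lemma Equiv.not_commute_swap_swap {a b c : α} (hab : a ≠ b) (hac : a ≠ c) (hbc : b ≠ c) :
    ¬Commute (swap a b) (swap a c) := by
  intro h
  have := congr($h b)
  simp [swap_apply_of_ne_of_ne hab.symm hbc, hac] at this

lemma Equiv.Perm.IsSwap.exists_eq_swap_of_not_commute {σ τ : Perm α} (hσ : σ.IsSwap)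
    (hτ : τ.IsSwap) (h : ¬Commute σ τ) :
    ∃ p u v, u ≠ p ∧ v ≠ p ∧ u ≠ v ∧ σ = swap p u ∧ τ = swap p v := by
  obtain ⟨a, b, hab, rfl⟩ := hσ
  obtain ⟨c, d, hcd, rfl⟩ := hτ
  have hne : swap a b ≠ swap c d := fun e => h (e ▸ Commute.refl _)
  rcases eq_or_eq_of_not_commute_swap_swap h with rfl | rfl | rfl | rfl
  · exact ⟨a, b, d, hab.symm, hcd.symm, fun e => hne (e ▸ rfl), rfl, rfl⟩
  · exact ⟨a, b, c, hab.symm, hcd, fun e => hne (e ▸ swap_comm _ _), rfl, swap_comm _ _⟩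
  · exact ⟨b, a, d, hab, hcd.symm, fun e => hne (e ▸ swap_comm _ _), swap_comm _ _, rfl⟩
  · exact ⟨b, a, c, hab, hcd, fun e => hne (e ▸ rfl), swap_comm _ _, swap_comm _ _⟩

lemma Equiv.Perm.closure_range_swap [Finite α] (a : α) :
    Subgroup.closure (Set.range (swap a)) = ⊤ := by
  rw [eq_top_iff, ← closure_isSwap, Subgroup.closure_le]
  rintro _ ⟨x, y, hxy, rfl⟩
  rcases eq_or_ne y a with rfl | hya
  · exact Subgroup.subset_closure ⟨x, swap_comm _ _⟩
  · rw [← swap_mul_swap_mul_swap hya hxy.symm]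
    exact mul_mem (mul_mem (Subgroup.subset_closure ⟨x, rfl⟩)
      (Subgroup.subset_closure ⟨y, swap_comm _ _⟩)) (Subgroup.subset_closure ⟨x, rfl⟩)

lemma MulEquiv.isSwap_apply_of_card_ne_six [Fintype α] (φ : Perm α ≃* Perm α)
    (hα : Fintype.card α ≠ 6) {σ : Perm α} (hσ : σ.IsSwap) : (φ σ).IsSwap := by
  obtain ⟨k, hk⟩ := cycleType_prime_order (σ := φ σ)
    (by rw [φ.orderOf_eq, hσ.orderOf]; exact Nat.prime_two)
  rw [φ.orderOf_eq, hσ.orderOf] at hk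
  have hcard := φ.natCard_centralizer_apply σ
  rw [natCard_centralizer_of_cycleType_eq_replicate_two hk,
    natCard_centralizer_of_cycleType_eq_replicate_two (k := 1) (isSwap_iff_cycleType.mp hσ)]
    at hcard
  have hsupp : 2 * (k + 1) ≤ Fintype.card α := by
    have := (φ σ).support.card_le_univ
    rw [← sum_cycleType, hk, Multiset.sum_replicate, smul_eq_mul] at this
    linarith
  rcases eq_or_ne k 0 with rfl | hk0
  · exact isSwap_iff_cycleType.mpr hk
  · exact absurd (eq_six_of_factorial_mul_two_pow_mul_factorial_eq (by omega) hsupp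
      (by simpa using hcard)) hα

lemma MulEquiv.exists_apply_swap_eq_swap (φ : Perm α ≃* Perm α)
    (hφ : ∀ σ : Perm α, σ.IsSwap → (φ σ).IsSwap) {a₀ a₁ a₂ p u v : α}
    (h₀₁ : a₀ ≠ a₁) (h₀₂ : a₀ ≠ a₂) (h₁₂ : a₁ ≠ a₂) (hvp : v ≠ p) (huv : u ≠ v)
    (hu : φ (swap a₀ a₁) = swap p u) (hv : φ (swap a₀ a₂) = swap p v) {x : α} (hx : x ≠ a₀) :
    ∃ w, φ (swap a₀ x) = swap p w := by
  rcases eq_or_ne x a₁ with rfl | hx₁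
  · exact ⟨u, hu⟩
  rcases eq_or_ne x a₂ with rfl | hx₂
  · exact ⟨v, hv⟩
  obtain ⟨a, b, -, hab⟩ := hφ _ (swap_isSwap_iff.mpr hx.symm)
  have h₁ : ¬Commute (swap p u) (swap a b) := by
    rw [← hu, ← hab]; exact φ.not_commute_apply (not_commute_swap_swap h₀₁ hx.symm hx₁.symm)
  have h₂ : ¬Commute (swap p v) (swap a b) := by
    rw [← hv, ← hab]; exact φ.not_commute_apply (not_commute_swap_swap h₀₂ hx.symm hx₂.symm)
  rcases eq_or_ne p a with rfl | hpa
  · exact ⟨b, hab⟩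
  rcases eq_or_ne p b with rfl | hpb
  · exact ⟨a, hab.trans (swap_comm _ _)⟩
  -- otherwise `φ (swap a₀ x)` would be `swap u v`, which is already the image of `swap a₁ a₂`
  have hua : u = a ∨ u = b :=
    ((eq_or_eq_of_not_commute_swap_swap h₁).resolve_left hpa).resolve_left hpb
  have hvb : v = a ∨ v = b :=
    ((eq_or_eq_of_not_commute_swap_swap h₂).resolve_left hpa).resolve_left hpb
  have hab_uv : swap a b = swap u v := by
    rcases hua with rfl | rfl <;> rcases hvb with rfl | rfl <;>
      first | exact absurd rfl huv | rfl | exact swap_comm _ _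
  have h₁₂_uv : φ (swap a₁ a₂) = swap u v := by
    rw [← swap_mul_swap_mul_swap h₀₂.symm h₁₂.symm, map_mul, map_mul, swap_comm a₂ a₀, hu, hv,
      swap_comm p v, swap_mul_swap_mul_swap hvp huv.symm]
  have := congr($(φ.injective (hab.trans (hab_uv.trans h₁₂_uv.symm))) a₀)
  simp [swap_apply_of_ne_of_ne h₀₁ h₀₂] at this
  exact absurd this hx

lemma MulEquiv.exists_conj_of_isSwap_apply [Finite α] {a₀ a₁ a₂ : α}
    (h₀₁ : a₀ ≠ a₁) (h₀₂ : a₀ ≠ a₂) (h₁₂ : a₁ ≠ a₂) (φ : Perm α ≃* Perm α)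
    (hφ : ∀ σ : Perm α, σ.IsSwap → (φ σ).IsSwap) :
    ∃ h : Perm α, ∀ g, φ g = h * g * h⁻¹ := by
  obtain ⟨p, u, v, -, hvp, huv, hu, hv⟩ :=
    (hφ _ (swap_isSwap_iff.mpr h₀₁)).exists_eq_swap_of_not_commute
      (hφ _ (swap_isSwap_iff.mpr h₀₂)) (φ.not_commute_apply (not_commute_swap_swap h₀₁ h₀₂ h₁₂))
  set f : α → α := fun x => φ (swap a₀ x) p
  have hf₀ : f a₀ = p := by simp [f, ← Perm.one_def]
  have hf : ∀ x, φ (swap a₀ x) = swap (f a₀) (f x) := by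
    intro x
    rcases eq_or_ne x a₀ with rfl | hx
    · simp [← Perm.one_def]
    · obtain ⟨w, hw⟩ := φ.exists_apply_swap_eq_swap hφ h₀₁ h₀₂ h₁₂ hvp huv hu hv hx
      simp [hf₀, f, hw]
  have hf_inj : f.Injective := fun x y hxy => by
    have hswap : swap a₀ x = swap a₀ y := φ.injective (by rw [hf, hf, hxy])
    simpa using congr($hswap a₀)
  set h := Equiv.ofBijective f (Finite.injective_iff_bijective.mp hf_inj)
  have hφh : (φ : Perm α →* Perm α) = (MulAut.conj h : Perm α →* Perm α) :=
    MonoidHom.eq_of_eqOn_dense (closure_range_swap a₀) <| by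
      rintro _ ⟨x, rfl⟩
      exact (hf x).trans (swap_apply_apply h a₀ x)
  exact ⟨h, fun g => congr($hφh g)⟩

end Swaps

/-- Every automorphism of the symmetric group `Sₙ` for `n ≠ 6` is inner. -/
theorem symmetricGroup_automorphism_inner (n : ℕ) (hn : n ≠ 6)
    (φ : Equiv.Perm (Fin n) ≃* Equiv.Perm (Fin n)) :
    ∃ h : Equiv.Perm (Fin n), ∀ g : Equiv.Perm (Fin n), φ g = h * g * h⁻¹ := by
  rcases lt_or_ge n 3 with hn3 | hn3
  · have hcard : Nat.card (Perm (Fin n)) ≤ 2 := by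
      rw [Nat.card_perm, Nat.card_fin]
      interval_cases n <;> decide
    exact ⟨1, fun g => by simp [φ.apply_eq_self_of_natCard_le_two hcard g]⟩
  · have h₀₁ : (⟨0, by omega⟩ : Fin n) ≠ ⟨1, by omega⟩ := by simp
    have h₀₂ : (⟨0, by omega⟩ : Fin n) ≠ ⟨2, by omega⟩ := by simp
    have h₁₂ : (⟨1, by omega⟩ : Fin n) ≠ ⟨2, by omega⟩ := by simp
    exact φ.exists_conj_of_isSwap_apply h₀₁ h₀₂ h₁₂ fun σ hσ =>
      φ.isSwap_apply_of_card_ne_six (by simpa using hn) hσ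
end

section
/- Let K be a field and A a central simple algebra over K. Then A ⊗_K A^op is isomorphic as a K-algebra to the matrix algebra M_n(K) where n = dim_K A. In particular, the Brauer class of the opposite algebra A^op is the inverse of the Brauer class of A. -/
/-!
A central simple algebra `A` is a simple module over `A ⊗[K] Aᵐᵒᵖ`, since its submodules are the
two-sided ideals, and the endomorphisms of this module are multiplications by central elements,
i.e. by scalars. The Jacobson density theorem then says that the action map
`A ⊗[K] Aᵐᵒᵖ → End_K A` is surjective, and both sides have dimension `n²`.
-/

open TensorProduct

attribute [local instance] instModuleTensorProductMop

lemma tensorProduct_op_tmul_smul {K A : Type*} [CommSemiring K] [Semiring A] [Algebra K A]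
    (a : A) (b : Aᵐᵒᵖ) (x : A) : (a ⊗ₜ[K] b) • x = a * x * b.unop := by
  rw [← AlgHom.mulLeftRight_apply K A]
  rfl

instance IsSimpleRing.isSimpleModule_tensorProduct_op {K A : Type*} [CommSemiring K] [Ring A]
    [Algebra K A] [IsSimpleRing A] : IsSimpleModule (A ⊗[K] Aᵐᵒᵖ) A := by
  refine { eq_bot_or_eq_top := fun N => ?_ }
  let I : TwoSidedIdeal A := .mk' N N.zero_mem N.add_mem N.neg_mem
    (fun {x _} hy => by simpa [tensorProduct_op_tmul_smul] using N.smul_mem (x ⊗ₜ 1) hy)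
    (fun {_ y} hx => by simpa [tensorProduct_op_tmul_smul] using N.smul_mem (1 ⊗ₜ .op y) hx)
  have mem_I (x : A) : x ∈ I ↔ x ∈ N := TwoSidedIdeal.mem_mk' ..
  rcases IsSimpleRing.simple.eq_bot_or_eq_top I with h | h
  · left; ext x; simp [← mem_I, h]
  · right; ext x; simp [← mem_I, h]

namespace Algebra.IsCentral

lemma exists_eq_smul_of_linearMap {K A : Type*} [CommSemiring K] [Semiring A] [Algebra K A]
    [IsCentral K A] (f : A →ₗ[A ⊗[K] Aᵐᵒᵖ] A) : ∃ k : K, ∀ x, f x = k • x := by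
  have f_eq_mul_left (x : A) : f x = x * f 1 := by
    simpa [tensorProduct_op_tmul_smul] using f.map_smul (x ⊗ₜ 1) 1
  have f_eq_mul_right (x : A) : f x = f 1 * x := by
    simpa [tensorProduct_op_tmul_smul] using f.map_smul (1 ⊗ₜ .op x) 1
  obtain ⟨k, hk⟩ := Algebra.mem_bot.mp <| IsCentral.out (K := K) <|
    Subalgebra.mem_center_iff.mpr fun x => (f_eq_mul_left x).symm.trans (f_eq_mul_right x)
  exact ⟨k, fun x => by rw [f_eq_mul_right, ← hk, Algebra.smul_def]⟩

variable {K A : Type*} [Field K] [Ring A] [Algebra K A] [IsCentral K A] [IsSimpleRing A]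
  [FiniteDimensional K A]

theorem mulLeftRight_surjective : Function.Surjective (AlgHom.mulLeftRight K A) := by
  classical
  intro g
  let g' : Module.End (Module.End (A ⊗[K] Aᵐᵒᵖ) A) A :=
    { toFun := g
      map_add' := g.map_add
      map_smul' := fun f x => by
        obtain ⟨k, hk⟩ := exists_eq_smul_of_linearMap f
        simp [Module.End.smul_def, hk] }
  let b := Module.finBasis K A
  obtain ⟨r, hr⟩ := jacobson_density g' (Finset.univ.image b)
  exact ⟨r, b.ext fun i => (hr _ (by simp)).symm⟩

theorem mulLeftRight_bijective : Function.Bijective (AlgHom.mulLeftRight K A) := by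
  have finrank_eq : Module.finrank K (A ⊗[K] Aᵐᵒᵖ) = Module.finrank K (Module.End K A) := by
    rw [Module.finrank_tensorProduct, MulOpposite.finrank, Module.finrank_linearMap]
  refine ⟨?_, mulLeftRight_surjective⟩
  exact (LinearMap.injective_iff_surjective_of_finrank_eq_finrank finrank_eq
    (f := (AlgHom.mulLeftRight K A).toLinearMap)).mpr mulLeftRight_surjective

instance isAzumaya : IsAzumaya K A where
  bij := mulLeftRight_bijective

end Algebra.IsCentral

/-- For a finite-dimensional central simple algebra `A` over a field `K`, the algebra
`A ⊗[K] Aᵐᵒᵖ` is isomorphic to the matrix algebra `End_K A ≅ Mₙ(K)`, `n = dim_K A`.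
In particular the Brauer class of `Aᵐᵒᵖ` is inverse to that of `A`. -/
theorem tensor_op_iso_end (K A : Type*) [Field K] [Ring A] [Algebra K A]
    [Algebra.IsCentral K A] [IsSimpleRing A] [FiniteDimensional K A] :
    Nonempty (A ⊗[K] Aᵐᵒᵖ ≃ₐ[K] Module.End K A) :=
  ⟨.ofBijective _ (IsAzumaya.AlgHom.mulLeftRight_bij K A)⟩
end
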